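/- arXiv:1605.00584 — 2 statements merged into one kernel-verified Lean document; each statement's English description precedes it below -/
import Mathlib

section
/- If −1 < λ < 0 and β > 1, then every fixed point of f is unstable, and there exists N ∈ ℕ such that for every integer k ≥ N the map f has a periodic orbit of minimal period k. -/
open Filter Topology

/-- The clipping function Φ. -/
noncomputable def Phi (t : ℝ) : ℝ := if t < -1 then -1 else if t ≤ 1 then t else 1

/-- The map f(x,s) = (λx + a·s, Φ(s + x' − x)). -/
noncomputable def f (lam a : ℝ) (p : ℝ × ℝ) : ℝ × ℝ :=
  (lam * p.1 + a * p.2, Phi (p.2 + (lam * p.1 + a * p.2) - p.1))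

/-- Membership in the strip L = {(x,s) : |s| ≤ 1}. -/
def inL (p : ℝ × ℝ) : Prop := |p.2| ≤ 1

/-- A trajectory of the map f, staying in the strip L. -/
def IsTraj (lam a : ℝ) (z : ℕ → ℝ × ℝ) : Prop :=
  (∀ n, inL (z n)) ∧ ∀ n, z (n + 1) = f lam a (z n)

/-- The set of fixed points of f in the strip L. -/
def fixedSet (lam a : ℝ) : Set (ℝ × ℝ) := {p | inL p ∧ f lam a p = p}

/-- Lyapunov stability of a fixed point. -/
def IsStableFixed (lam a : ℝ) (P : ℝ × ℝ) : Prop :=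
  ∀ ε > 0, ∃ δ > 0, ∀ z : ℕ → ℝ × ℝ, IsTraj lam a z → dist (z 0) P < δ →
    ∀ n, dist (z n) P < ε

/-- Semi-stability of a fixed point. -/
def IsSemiStable (lam a : ℝ) (P : ℝ × ℝ) : Prop :=
  ∃ U₁ U₂ : Set (ℝ × ℝ), IsOpen U₁ ∧ IsOpen U₂ ∧
    U₁ ⊆ {p | |p.2| < 1} ∧ U₂ ⊆ {p | |p.2| < 1} ∧
    P ∈ frontier U₁ ∧ P ∈ frontier U₂ ∧
    (∀ ε > 0, ∃ δ > 0, ∀ z : ℕ → ℝ × ℝ, IsTraj lam a z → z 0 ∈ U₁ →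
      dist (z 0) P < δ → ∀ n, dist (z n) P < ε) ∧
    (∃ ε₀ > 0, ∀ z : ℕ → ℝ × ℝ, IsTraj lam a z → z 0 ∈ U₂ →
      ∃ n, ε₀ ≤ dist (z n) P)

/-- Stability of a set (e.g. a periodic orbit) for the dynamics of f. -/
def IsStableSet (lam a : ℝ) (O : Set (ℝ × ℝ)) : Prop :=
  ∀ ε > 0, ∃ δ > 0, ∀ z : ℕ → ℝ × ℝ, IsTraj lam a z →
    Metric.infDist (z 0) O < δ → ∀ n, Metric.infDist (z n) O < ε

/-- O is a periodic orbit of f. -/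
def IsPeriodicOrbit (lam a : ℝ) (O : Set (ℝ × ℝ)) : Prop :=
  ∃ P : ℝ × ℝ, ∃ m : ℕ, 1 ≤ m ∧ inL P ∧ (f lam a)^[m] P = P ∧
    O = {q | ∃ i < m, (f lam a)^[i] P = q}

/-- P is a periodic point of minimal period k. -/
def HasMinPeriod (lam a : ℝ) (P : ℝ × ℝ) (k : ℕ) : Prop :=
  (f lam a)^[k] P = P ∧ ∀ j, 1 ≤ j → j < k → (f lam a)^[j] P ≠ P

/-!
Off the clipping, the map preserves x − s, and on the line x − s = c it acts on s as the expansion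
s ↦ r + β(s − r) about the point r with (β − 1) r = (1 − λ) c. A fixed point is such a centre, so a
perturbation along the diagonal grows like βⁿ until it leaves any small neighbourhood.

A periodic orbit of period m + n is made of two runs: from s = 1 on the line x − s = c_A, s decreases
for m steps and is clipped to −1, which moves the point to a line x − s = c_B; there s increases for
n steps and is clipped back to 1, at the starting point. Asking that the unclipped values at the
two clipped steps be 1 − w and −1 + w for a common w leaves one linear equation for w. Since λ < 0,
for large m and n its solution satisfies w ≤ 2β, and this bound keeps both runs inside the strip.
-/

lemma Phi_of_abs_le_one {t : ℝ} (h : |t| ≤ 1) : Phi t = t := by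
  rw [abs_le] at h
  unfold Phi; split_ifs <;> linarith

lemma Phi_of_le_neg_one {t : ℝ} (h : t ≤ -1) : Phi t = -1 := by
  unfold Phi; split_ifs <;> linarith

lemma Phi_of_one_le {t : ℝ} (h : 1 ≤ t) : Phi t = 1 := by
  unfold Phi; split_ifs <;> linarith

lemma abs_Phi_le_one (t : ℝ) : |Phi t| ≤ 1 := by
  rw [abs_le]
  unfold Phi; split_ifs <;> constructor <;> linarith

lemma isTraj_iterate {lam a : ℝ} {p : ℝ × ℝ} (hp : inL p) :
    IsTraj lam a (fun n => (f lam a)^[n] p) := by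
  refine ⟨fun n => ?_, fun n => Function.iterate_succ_apply' _ n p⟩
  cases n with
  | zero => exact hp
  | succ n =>
    show |((f lam a)^[n + 1] p).2| ≤ 1
    rw [Function.iterate_succ_apply']
    exact abs_Phi_le_one _

def affineOrbit (b r s : ℝ) (n : ℕ) : ℝ := r + b ^ n * (s - r)

lemma affineOrbit_zero (b r s : ℝ) : affineOrbit b r s 0 = s := by
  simp [affineOrbit]

lemma affineOrbit_succ (b r s : ℝ) (n : ℕ) :
    affineOrbit b r s (n + 1) = r + b * (affineOrbit b r s n - r) := by
  simp only [affineOrbit, pow_succ]; ring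

lemma affineOrbit_neg (b r s : ℝ) (n : ℕ) :
    affineOrbit b (-r) (-s) n = -affineOrbit b r s n := by
  simp only [affineOrbit]; ring

/-- Being affine in `b ^ j`, `affineOrbit b r s j` lies between its values at `0` and `N`. -/
lemma abs_affineOrbit_le_one {b r s : ℝ} {j N : ℕ} (hb : 1 ≤ b) (hjN : j ≤ N) (h0 : |s| ≤ 1)
    (hN : |affineOrbit b r s N| ≤ 1) : |affineOrbit b r s j| ≤ 1 := by
  have h1 : 1 ≤ b ^ j := one_le_pow₀ hb
  have h2 : b ^ j ≤ b ^ N := pow_le_pow_right₀ hb hjN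
  simp only [affineOrbit, abs_le] at h0 hN ⊢
  rcases le_total r s with h | h <;> constructor <;> nlinarith

section Line

variable {lam a r c : ℝ}

lemma f_on_line (hr : (lam + a - 1) * r = (1 - lam) * c) (s : ℝ) :
    f lam a (c + s, s) = (c + (r + (lam + a) * (s - r)), Phi (r + (lam + a) * (s - r))) := by
  have hx : lam * (c + s) + a * s = c + (r + (lam + a) * (s - r)) := by linear_combination hr
  simp only [f, hx]
  ring_nf

lemma iterate_f_on_line (hb : 1 ≤ lam + a) (hr : (lam + a - 1) * r = (1 - lam) * c) {s : ℝ}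
    {N : ℕ} (h0 : |s| ≤ 1) (hN : |affineOrbit (lam + a) r s N| ≤ 1) :
    (f lam a)^[N] (c + s, s) = (c + affineOrbit (lam + a) r s N, affineOrbit (lam + a) r s N) := by
  induction N with
  | zero => simp [affineOrbit_zero]
  | succ N ih =>
    rw [Function.iterate_succ_apply',
      ih (abs_affineOrbit_le_one hb N.le_succ h0 hN), f_on_line hr, ← affineOrbit_succ,
      Phi_of_abs_le_one hN]

lemma iterate_succ_f_on_line (hb : 1 ≤ lam + a) (hr : (lam + a - 1) * r = (1 - lam) * c)
    {s : ℝ} {N : ℕ} (h0 : |s| ≤ 1) (hN : |affineOrbit (lam + a) r s N| ≤ 1) :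
    (f lam a)^[N + 1] (c + s, s) =
      (c + affineOrbit (lam + a) r s (N + 1), Phi (affineOrbit (lam + a) r s (N + 1))) := by
  rw [Function.iterate_succ_apply', iterate_f_on_line hb hr h0 hN, f_on_line hr,
    ← affineOrbit_succ]

end Line

lemma abs_add_le_one_of_mul_nonpos {s t : ℝ} (hs : |s| ≤ 1) (ht : |t| ≤ 1) (hst : s * t ≤ 0) :
    |s + t| ≤ 1 := by
  rw [abs_le] at *
  rcases le_total 0 s with h | h <;> rcases le_total 0 t with h' | h' <;>
    constructor <;> nlinarith

theorem not_isStableFixed {lam a : ℝ} (hb : 1 < lam + a) {P : ℝ × ℝ}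
    (hP : P ∈ fixedSet lam a) : ¬ IsStableFixed lam a P := by
  obtain ⟨x, s⟩ := P
  obtain ⟨hs, hfix⟩ := hP
  have hr : (lam + a - 1) * s = (1 - lam) * (x - s) := by
    have := congrArg Prod.fst hfix
    simp only [f] at this
    linarith
  have hb0 : 0 < lam + a := by linarith
  intro hstab
  obtain ⟨δ, hδ, hstable⟩ := hstab (1 / (lam + a)) (by positivity)
  set d := min (δ / 2) 1
  have hd0 : 0 < d := lt_min (by positivity) one_pos
  obtain ⟨n, hn, hn'⟩ := exists_nat_pow_near (one_le_one_div hd0 (min_le_right _ _)) hb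
  -- perturb towards the farther edge, so that the orbit stays in the strip while `|βʲ t| ≤ 1`
  obtain ⟨t, ht, hst⟩ : ∃ t, |t| = d ∧ s * t ≤ 0 := by
    rcases le_total 0 s with h | h
    · exact ⟨-d, by simp [hd0.le], by nlinarith⟩
    · exact ⟨d, abs_of_pos hd0, by nlinarith⟩
  have hbnt : |(lam + a) ^ n * t| = (lam + a) ^ n * d := by
    rw [abs_mul, abs_of_pos (by positivity), ht]
  have horbit : affineOrbit (lam + a) s (s + t) n = s + (lam + a) ^ n * t := by
    simp [affineOrbit]
  have h0 : |s + t| ≤ 1 := abs_add_le_one_of_mul_nonpos hs (ht ▸ min_le_right _ _) hst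
  have hN : |affineOrbit (lam + a) s (s + t) n| ≤ 1 := by
    rw [horbit]
    refine abs_add_le_one_of_mul_nonpos hs ?_ ?_
    · rwa [hbnt, ← le_div_iff₀ hd0]
    · nlinarith [pow_pos hb0 n]
  have hstart : (x + t, s + t) = (x - s + (s + t), s + t) := by ext <;> simp only; ring
  have hclose : dist (x + t, s + t) (x, s) < δ := by
    simp only [Prod.dist_eq, Real.dist_eq, add_sub_cancel_left, ht, max_self]
    exact (min_le_left _ _).trans_lt (half_lt_self hδ)
  have hfar := hstable _ (isTraj_iterate (p := (x + t, s + t)) h0) hclose n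
  rw [hstart, iterate_f_on_line hb.le hr h0 hN, horbit, Prod.dist_eq, Real.dist_eq,
    Real.dist_eq, show x - s + (s + (lam + a) ^ n * t) - x = (lam + a) ^ n * t by ring,
    add_sub_cancel_left, hbnt, max_self, lt_div_iff₀ hb0] at hfar
  rw [div_lt_iff₀ hd0, pow_succ] at hn'
  linarith

/-- A descending run of `m + 1` steps from `s = 1` on the line `x - s = cA`, clipped onto the line
`x - s = cB`, followed by an ascending run of `n + 1` steps from `s = -1`, clipped back onto the
start. -/
theorem hasMinPeriod_of_two_runs {lam a cA cB rA rB : ℝ} {m n : ℕ} (hb : 1 < lam + a)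
    (hrA : (lam + a - 1) * rA = (1 - lam) * cA) (hrB : (lam + a - 1) * rB = (1 - lam) * cB)
    (hcAB : cB < cA)
    (hA : |affineOrbit (lam + a) rA 1 m| ≤ 1)
    (hA_clip : affineOrbit (lam + a) rA 1 (m + 1) = cB - cA - 1)
    (hB : |affineOrbit (lam + a) rB (-1) n| ≤ 1)
    (hB_clip : affineOrbit (lam + a) rB (-1) (n + 1) = cA - cB + 1) :
    HasMinPeriod lam a (cA + 1, 1) (m + n + 2) := by
  have h1 : |(1 : ℝ)| ≤ 1 := by simp
  have h1' : |(-1 : ℝ)| ≤ 1 := by simp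
  have runA : (f lam a)^[m + 1] (cA + 1, 1) = (cB + -1, -1) := by
    rw [iterate_succ_f_on_line hb.le hrA h1 hA, hA_clip, Phi_of_le_neg_one (by linarith)]
    ext <;> simp only; ring
  have runB : (f lam a)^[n + 1] (cB + -1, -1) = (cA + 1, 1) := by
    rw [iterate_succ_f_on_line hb.le hrB h1' hB, hB_clip, Phi_of_one_le (by linarith)]
    ext <;> simp only; ring
  have hrA1 : rA ≠ 1 := by
    rintro rfl
    simp only [affineOrbit, sub_self, mul_zero, add_zero] at hA_clip
    linarith
  refine ⟨?_, fun j hj1 hjk => ?_⟩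
  · rw [show m + n + 2 = (n + 1) + (m + 1) by ring, Function.iterate_add_apply, runA, runB]
  rcases le_or_gt j m with hjm | hjm
  · -- the descending run stays below `s = 1`
    rw [iterate_f_on_line hb.le hrA h1 (abs_affineOrbit_le_one hb.le hjm h1 hA)]
    intro h
    have hj : ((lam + a) ^ j - 1) * (1 - rA) = 0 := by
      have := congrArg Prod.snd h
      simp only [affineOrbit] at this
      linear_combination this
    rcases mul_eq_zero.1 hj with h | h
    · exact (one_lt_pow₀ hb (show j ≠ 0 by omega)).ne' (by linarith)
    · exact hrA1 (by linarith)
  · -- the ascending run stays on the line `x - s = cB`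
    obtain ⟨i, rfl⟩ : ∃ i, j = i + (m + 1) := ⟨j - (m + 1), by omega⟩
    rw [Function.iterate_add_apply, runA,
      iterate_f_on_line hb.le hrB h1' (abs_affineOrbit_le_one hb.le (by omega) h1' hB)]
    intro h
    simp only [Prod.ext_iff] at h
    linarith [h.1, h.2]

lemma affineOrbit_overshoot {b w : ℝ} (hb : 1 < b) (m : ℕ) (hw0 : 0 ≤ w) (hw : w ≤ 2 * b) :
    |affineOrbit b (1 + w / (b ^ (m + 1) - 1)) 1 m| ≤ 1 ∧
      affineOrbit b (1 + w / (b ^ (m + 1) - 1)) 1 (m + 1) = 1 - w := by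
  have hu : 0 < b ^ (m + 1) - 1 := by linarith [one_lt_pow₀ hb (show m + 1 ≠ 0 by omega)]
  set q := w / (b ^ (m + 1) - 1) with hq_def
  have horbit (j : ℕ) : affineOrbit b (1 + q) 1 j = 1 - (b ^ j - 1) * q := by
    simp only [affineOrbit]; ring
  have hqw : (b ^ (m + 1) - 1) * q = w := mul_div_cancel₀ w hu.ne'
  refine ⟨?_, by rw [horbit, hqw]⟩
  have hq : 0 ≤ q := div_nonneg hw0 hu.le
  have hm0 : 0 ≤ (b ^ m - 1) * q := mul_nonneg (by linarith [one_le_pow₀ (n := m) hb.le]) hq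
  have hm2 : b * ((b ^ m - 1) * q) ≤ b * 2 := by
    calc b * ((b ^ m - 1) * q) ≤ (b ^ (m + 1) - 1) * q := by rw [pow_succ]; nlinarith
      _ ≤ b * 2 := by linarith
  rw [horbit, abs_le]
  constructor <;> nlinarith

/-- With centres `1 + w / u` and `-(1 + w / v)`, the equation says that the first clipped step
lands on the line of the second run. -/
lemma exists_overshoot {lam b u v : ℝ} (hlam : lam < 0) (hb : 1 < b)
    (hu : 2 * b ≤ -lam * u) (hv : 2 * b ≤ -lam * v) :
    ∃ w, 0 ≤ w ∧ w ≤ 2 * b ∧ (1 - lam) * (2 - w) = -(b - 1) * ((1 + w / u) + (1 + w / v)) := by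
  have hu0 : 0 < u := by nlinarith
  have hv0 : 0 < v := by nlinarith
  obtain ⟨D, hD_def⟩ : ∃ D, D = 1 - lam - (b - 1) * (1 / u + 1 / v) := ⟨_, rfl⟩
  have hbD : b - lam ≤ b * D := by
    have hu' : b / u ≤ -lam / 2 := by rw [div_le_iff₀ hu0]; linarith
    have hv' : b / v ≤ -lam / 2 := by rw [div_le_iff₀ hv0]; linarith
    have : b * D = b * (1 - lam) - (b - 1) * (b / u + b / v) := by rw [hD_def]; ring
    nlinarith
  have hD : 0 < D := by nlinarith
  refine ⟨2 * (b - lam) / D, div_nonneg (by linarith) hD.le, ?_, ?_⟩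
  · rw [div_le_iff₀ hD]; linarith
  · have hwD : 2 * (b - lam) / D * D = 2 * (b - lam) := div_mul_cancel₀ _ hD.ne'
    linear_combination (-1 : ℝ) * hwD + 2 * (b - lam) / D * hD_def

theorem exists_hasMinPeriod {lam a : ℝ} (hlam : lam < 0) (hb : 1 < lam + a) {m n : ℕ}
    (hm : 2 * (lam + a) ≤ -lam * ((lam + a) ^ (m + 1) - 1))
    (hn : 2 * (lam + a) ≤ -lam * ((lam + a) ^ (n + 1) - 1)) :
    ∃ c : ℝ, HasMinPeriod lam a (c + 1, 1) (m + n + 2) := by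
  have hl : 0 < 1 - lam := by linarith
  obtain ⟨w, hw0, hw, hclose⟩ := exists_overshoot hlam hb hm hn
  obtain ⟨hA, hA_clip⟩ := affineOrbit_overshoot hb m hw0 hw
  obtain ⟨hB, hB_clip⟩ := affineOrbit_overshoot hb n hw0 hw
  -- the two lines are `x - s = (β - 1) r / (1 - λ)` for the centres `r = ±(1 + w / ...)`
  refine ⟨_, hasMinPeriod_of_two_runs hb (mul_div_cancel₀ _ hl.ne').symm
    (mul_div_cancel₀ (_ * -(1 + w / ((lam + a) ^ (n + 1) - 1))) hl.ne').symm ?_ hA ?_ ?_ ?_⟩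
  · have hu : 0 ≤ w / ((lam + a) ^ (m + 1) - 1) := div_nonneg hw0 (by nlinarith)
    have hv : 0 ≤ w / ((lam + a) ^ (n + 1) - 1) := div_nonneg hw0 (by nlinarith)
    exact div_lt_div_of_pos_right (mul_lt_mul_of_pos_left (by linarith) (by linarith)) hl
  · rw [hA_clip, ← sub_div, eq_sub_iff_add_eq, eq_div_iff hl.ne']
    linear_combination hclose
  · rwa [affineOrbit_neg, abs_neg]
  · rw [affineOrbit_neg, hB_clip, ← sub_div, div_add_one hl.ne', eq_div_iff hl.ne']
    linear_combination -hclose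

theorem stmt7_general (lam a : ℝ) (h2 : lam < 0) (h3 : 1 < lam + a) :
    (∀ P ∈ fixedSet lam a, ¬ IsStableFixed lam a P) ∧
    ∃ N : ℕ, ∀ k : ℕ, N ≤ k → ∃ P : ℝ × ℝ, inL P ∧ HasMinPeriod lam a P k := by
  refine ⟨fun P hP => not_isStableFixed h3 hP, ?_⟩
  obtain ⟨N, hN⟩ := pow_unbounded_of_one_lt (2 * (lam + a) / -lam + 1) h3
  have hlarge (M : ℕ) (hM : N ≤ M) : 2 * (lam + a) ≤ -lam * ((lam + a) ^ M - 1) := by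
    have := pow_le_pow_right₀ h3.le hM
    exact (div_le_iff₀' (by linarith)).1 (by linarith)
  refine ⟨2 * N + 2, fun k hk => ?_⟩
  obtain ⟨c, hc⟩ := exists_hasMinPeriod h2 h3 (m := k / 2 - 1) (n := k - k / 2 - 1)
    (hlarge _ (by omega)) (hlarge _ (by omega))
  refine ⟨(c + 1, 1), by simp [inL], ?_⟩
  rwa [show k / 2 - 1 + (k - k / 2 - 1) + 2 = k by omega] at hc

/-- Case (e): −1 < λ < 0, β > 1. All fixed points are unstable and f has periodic
orbits of all sufficiently large minimal periods. -/
theorem stmt7 (lam a : ℝ) (h1 : -1 < lam) (h2 : lam < 0) (h3 : 1 < lam + a) :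
    (∀ P ∈ fixedSet lam a, ¬ IsStableFixed lam a P) ∧
    ∃ N : ℕ, ∀ k : ℕ, N ≤ k → ∃ P : ℝ × ℝ, inL P ∧ HasMinPeriod lam a P k :=
  stmt7_general lam a h2 h3
end

section
/- If −1 < λ < 0 and β = 1, then every fixed point of f is unstable, and every trajectory either reaches the point E = (a/(1−λ), 1) or the point F = (−a/(1−λ), −1) after finitely many iterations, or its distance to the segment EF of fixed points tends to 0 as n → ∞. -/
open Filter Topology

/-- The segment EF of fixed points. -/
def segEF (lam a : ℝ) : Set (ℝ × ℝ) :=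
  {p | ∃ s ∈ Set.Icc (-1 : ℝ) 1, p = (a * s / (1 - lam), s)}

lemma Phi_of_gt {t : ℝ} (h : 1 < t) : Phi t = 1 := by
  unfold Phi; rw [if_neg (by linarith), if_neg (by linarith)]

lemma Phi_of_lt {t : ℝ} (h : t < -1) : Phi t = -1 := by
  unfold Phi; rw [if_pos h]

lemma Phi_of_mem {t : ℝ} (h1 : -1 ≤ t) (h2 : t ≤ 1) : Phi t = t := by
  unfold Phi; rw [if_neg (by linarith), if_pos h2]

lemma Phi_mem (t : ℝ) : -1 ≤ Phi t ∧ Phi t ≤ 1 := by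
  unfold Phi; split_ifs <;> constructor <;> linarith

/-- key step formula, with a = 1 - lam -/
lemma step {lam a : ℝ} (h3 : lam + a = 1) {z : ℕ → ℝ × ℝ} (hz : IsTraj lam a z) (n : ℕ) :
    z (n+1) = ((z n).1 + a * ((z n).2 - (z n).1),
      Phi ((z n).2 + a * ((z n).2 - (z n).1))) := by
  rw [hz.2 n]
  unfold f
  have : lam = 1 - a := by linarith
  have e1 : lam * (z n).1 + a * (z n).2 = (z n).1 + a * ((z n).2 - (z n).1) := by
    rw [this]; ring
  rw [e1]
  have e2 : (z n).2 + ((z n).1 + a * ((z n).2 - (z n).1)) - (z n).1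
      = (z n).2 + a * ((z n).2 - (z n).1) := by ring
  rw [e2]

/-- difference d = s - x -/
def dd (z : ℕ → ℝ × ℝ) (n : ℕ) : ℝ := (z n).2 - (z n).1

lemma mono_step {lam a : ℝ} (h1 : -1 < lam) (h2 : lam < 0) (h3 : lam + a = 1)
    {z : ℕ → ℝ × ℝ} (hz : IsTraj lam a z) (n : ℕ) :
    |dd z (n+1)| ≤ |dd z n| := by
  have hs : |(z n).2| ≤ 1 := hz.1 n
  rw [abs_le] at hs
  have hst := step h3 hz n
  set x := (z n).1 with hxdef
  set s := (z n).2 with hsdef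
  have hdd : dd z n = s - x := rfl
  have hdd1 : dd z (n+1) = Phi (s + a * (s - x)) - (x + a * (s - x)) := by
    unfold dd; rw [hst]
  rw [hdd, hdd1]
  by_cases hgt : 1 < s + a * (s - x)
  · rw [Phi_of_gt hgt]
    have hd : 0 < s - x := by nlinarith
    rw [abs_of_pos hd, abs_le]
    constructor <;> nlinarith
  · by_cases hlt : s + a * (s - x) < -1
    · rw [Phi_of_lt hlt]
      have hd : s - x < 0 := by nlinarith
      rw [abs_of_neg hd, abs_le]
      constructor <;> nlinarith
    · rw [Phi_of_mem (by linarith) (by linarith)]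
      have : s + a * (s - x) - (x + a * (s - x)) = s - x := by ring
      rw [this]

lemma mono_le {lam a : ℝ} (h1 : -1 < lam) (h2 : lam < 0) (h3 : lam + a = 1)
    {z : ℕ → ℝ × ℝ} (hz : IsTraj lam a z) {n m : ℕ} (h : n ≤ m) :
    |dd z m| ≤ |dd z n| := by
  induction m with
  | zero => simp_all
  | succ k ih =>
    rcases Nat.lt_or_ge n (k+1) with hlt | hge
    · exact (mono_step h1 h2 h3 hz k).trans (ih (Nat.lt_succ_iff.mp hlt))
    · have : n = k + 1 := le_antisymm h hge
      rw [this]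

lemma clip_up {lam a : ℝ} (h1 : -1 < lam) (h2 : lam < 0) (h3 : lam + a = 1)
    {z : ℕ → ℝ × ℝ} (hz : IsTraj lam a z) (n : ℕ)
    (hgt : 1 < (z n).2 + a * dd z n) :
    |dd z (n+2)| ≤ -lam * |dd z n| := by
  have hs : |(z n).2| ≤ 1 := hz.1 n
  rw [abs_le] at hs
  have hst := step h3 hz n
  set x := (z n).1 with hxdef
  set s := (z n).2 with hsdef
  have hdd : dd z n = s - x := rfl
  rw [hdd] at hgt ⊢
  have ha : a = 1 - lam := by linarith
  have hd : 0 < s - x := by nlinarith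
  have hx1 : (z (n+1)).1 = x + a * (s - x) := by rw [hst]
  have hs1 : (z (n+1)).2 = 1 := by rw [hst]; exact Phi_of_gt hgt
  have hd1 : dd z (n+1) = (1 - s) + lam * (s - x) := by
    unfold dd; rw [hx1, hs1, ha]; ring
  have hd1lb : lam * (s - x) ≤ dd z (n+1) := by rw [hd1]; nlinarith
  have hd1ub : dd z (n+1) < s - x := by rw [hd1]; nlinarith
  rw [abs_of_pos hd]
  by_cases hpos : 0 < dd z (n+1)
  · -- clips again
    have hst1 := step h3 hz (n+1)
    have hgt1 : 1 < (z (n+1)).2 + a * ((z (n+1)).2 - (z (n+1)).1) := by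
      have h11 : (z (n+1)).2 - (z (n+1)).1 = dd z (n+1) := rfl
      rw [h11, hs1]; nlinarith
    have hs2 : (z (n+2)).2 = 1 := by rw [hst1]; exact Phi_of_gt hgt1
    have hx2 : (z (n+2)).1 = (z (n+1)).1 + a * ((z (n+1)).2 - (z (n+1)).1) := by
      rw [hst1]
    have h11 : (z (n+1)).2 - (z (n+1)).1 = dd z (n+1) := rfl
    have h1x : 1 - (z (n+1)).1 = dd z (n+1) := by unfold dd; rw [hs1]
    have hd2 : dd z (n+2) = lam * dd z (n+1) := by
      have e : dd z (n+2) = 1 - ((z (n+1)).1 + a * dd z (n+1)) := by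
        unfold dd; rw [hs2, hx2, h11]
      rw [e, show (1:ℝ) - ((z (n+1)).1 + a * dd z (n+1))
          = (1 - (z (n+1)).1) - a * dd z (n+1) by ring, h1x, ha]
      ring
    rw [hd2, abs_of_nonpos (by nlinarith), ← neg_mul]
    nlinarith
  · push_neg at hpos
    have h1' : |dd z (n+1)| ≤ -lam * (s - x) := by
      rw [abs_of_nonpos hpos]; nlinarith
    calc |dd z (n+2)| ≤ |dd z (n+1)| := mono_step h1 h2 h3 hz (n+1)
      _ ≤ -lam * (s - x) := h1'

lemma Phi_neg (t : ℝ) : Phi (-t) = -Phi t := by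
  unfold Phi; split_ifs <;> first | rfl | linarith

lemma f_neg (lam a : ℝ) (p : ℝ × ℝ) : f lam a (-p) = -(f lam a p) := by
  unfold f
  have e1 : lam * (-p).1 + a * (-p).2 = -(lam * p.1 + a * p.2) := by
    simp; ring
  rw [e1]
  have e2 : (-p).2 + -(lam * p.1 + a * p.2) - (-p).1
      = -(p.2 + (lam * p.1 + a * p.2) - p.1) := by simp; ring
  rw [e2, Phi_neg]
  rfl

lemma traj_neg {lam a : ℝ} {z : ℕ → ℝ × ℝ} (hz : IsTraj lam a z) :
    IsTraj lam a (fun n => -(z n)) := by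
  constructor
  · intro n
    have := hz.1 n
    unfold inL at *
    simpa using this
  · intro n
    simp only []
    rw [hz.2 n, f_neg]

lemma dd_neg (z : ℕ → ℝ × ℝ) (n : ℕ) : dd (fun k => -(z k)) n = -dd z n := by
  unfold dd; simp; ring

lemma clip2 {lam a : ℝ} (h1 : -1 < lam) (h2 : lam < 0) (h3 : lam + a = 1)
    {z : ℕ → ℝ × ℝ} (hz : IsTraj lam a z) (n : ℕ)
    (hclip : 1 < |(z n).2 + a * dd z n|) :
    |dd z (n+2)| ≤ -lam * |dd z n| := by
  rcases lt_abs.mp hclip with hgt | hlt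
  · exact clip_up h1 h2 h3 hz n hgt
  · have hlt' : (z n).2 + a * dd z n < -1 := by linarith
    have hw := clip_up h1 h2 h3 (traj_neg hz) n (by
      have e : ((fun k => -(z k)) n).2 + a * dd (fun k => -(z k)) n
          = -((z n).2 + a * dd z n) := by
        rw [dd_neg]; simp; ring
      rw [e]; linarith)
    rw [dd_neg, dd_neg, abs_neg, abs_neg] at hw
    exact hw

lemma clip_exists {lam a : ℝ} (h1 : -1 < lam) (h2 : lam < 0) (h3 : lam + a = 1)
    {z : ℕ → ℝ × ℝ} (hz : IsTraj lam a z) (n : ℕ) (hne : dd z n ≠ 0) :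
    ∃ k, n ≤ k ∧ 1 < |(z k).2 + a * dd z k| := by
  by_contra hcon
  push_neg at hcon
  have ha : 1 < a := by linarith
  have key : ∀ j : ℕ, dd z (n+j) = dd z n ∧
      (z (n+j)).2 = (z n).2 + j * (a * dd z n) := by
    intro j
    induction j with
    | zero => simp
    | succ k ih =>
      have hb := hcon (n+k) (Nat.le_add_right n k)
      rw [abs_le] at hb
      have hst := step h3 hz (n+k)
      have hphi : Phi ((z (n+k)).2 + a * ((z (n+k)).2 - (z (n+k)).1))
          = (z (n+k)).2 + a * ((z (n+k)).2 - (z (n+k)).1) :=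
        Phi_of_mem hb.1 hb.2
      have hs' : (z (n+(k+1))).2 = (z (n+k)).2 + a * dd z (n+k) := by
        rw [show n+(k+1) = (n+k)+1 by ring, hst, hphi]; rfl
      have hd' : dd z (n+(k+1)) = dd z (n+k) := by
        unfold dd
        rw [show n+(k+1) = (n+k)+1 by ring, hst, hphi]
        ring
      refine ⟨by rw [hd', ih.1], ?_⟩
      rw [hs', ih.1, ih.2]
      push_cast
      ring
  have hpos : 0 < a * |dd z n| := by positivity
  obtain ⟨j, hj⟩ := exists_nat_gt (2 / (a * |dd z n|))
  have hj2 : 2 < j * (a * |dd z n|) := by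
    rw [div_lt_iff₀ hpos] at hj
    linarith
  have h1' := hz.1 (n+j)
  have h2' := hz.1 n
  unfold inL at h1' h2'
  rw [abs_le] at h1' h2'
  have hdiff : |(z (n+j)).2 - (z n).2| ≤ 2 := by
    rw [abs_le]; constructor <;> linarith
  rw [(key j).2] at hdiff
  have : |(z n).2 + j * (a * dd z n) - (z n).2| = j * (a * |dd z n|) := by
    rw [show (z n).2 + j * (a * dd z n) - (z n).2 = j * (a * dd z n) by ring,
      abs_mul, abs_mul]
    simp [abs_of_nonneg (le_of_lt (by linarith : (0:ℝ) < a))]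
  rw [this] at hdiff
  linarith

lemma claimA {lam a : ℝ} (h1 : -1 < lam) (h2 : lam < 0) (h3 : lam + a = 1)
    {z : ℕ → ℝ × ℝ} (hz : IsTraj lam a z) (n : ℕ) :
    ∃ m, |dd z m| ≤ -lam * |dd z n| := by
  by_cases hne : dd z n = 0
  · exact ⟨n, by rw [hne]; simp⟩
  · obtain ⟨k, hk, hclip⟩ := clip_exists h1 h2 h3 hz n hne
    refine ⟨k+2, (clip2 h1 h2 h3 hz k hclip).trans ?_⟩
    have := mono_le h1 h2 h3 hz hk
    nlinarith
lemma iterA {lam a : ℝ} (h1 : -1 < lam) (h2 : lam < 0) (h3 : lam + a = 1)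
    {z : ℕ → ℝ × ℝ} (hz : IsTraj lam a z) (j : ℕ) :
    ∃ m, |dd z m| ≤ (-lam)^j * |dd z 0| := by
  induction j with
  | zero => exact ⟨0, by simp⟩
  | succ k ih =>
    obtain ⟨m, hm⟩ := ih
    obtain ⟨m', hm'⟩ := claimA h1 h2 h3 hz m
    refine ⟨m', hm'.trans ?_⟩
    rw [pow_succ]
    nlinarith [abs_nonneg (dd z 0), pow_nonneg (by linarith : (0:ℝ) ≤ -lam) k]

lemma dd_tendsto {lam a : ℝ} (h1 : -1 < lam) (h2 : lam < 0) (h3 : lam + a = 1)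
    {z : ℕ → ℝ × ℝ} (hz : IsTraj lam a z) :
    Tendsto (fun n => |dd z n|) atTop (𝓝 0) := by
  rw [Metric.tendsto_atTop]
  intro ε hε
  have hpow : Tendsto (fun j : ℕ => (-lam)^j) atTop (𝓝 0) :=
    tendsto_pow_atTop_nhds_zero_of_lt_one (by linarith) (by linarith)
  have hpos : 0 < ε / (|dd z 0| + 1) := by positivity
  obtain ⟨j, hj⟩ := (Metric.tendsto_atTop.mp hpow) (ε / (|dd z 0| + 1)) hpos
  have hj' := hj j le_rfl
  rw [Real.dist_eq, sub_zero,
    abs_of_nonneg (pow_nonneg (by linarith : (0:ℝ) ≤ -lam) j)] at hj'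
  obtain ⟨m, hm⟩ := iterA h1 h2 h3 hz j
  refine ⟨m, fun n hn => ?_⟩
  rw [Real.dist_eq, sub_zero, abs_abs]
  have h4 := mono_le h1 h2 h3 hz hn
  have h5 : (-lam)^j * |dd z 0| < ε := by
    have := abs_nonneg (dd z 0)
    calc (-lam)^j * |dd z 0| ≤ (-lam)^j * (|dd z 0| + 1) := by
          nlinarith [pow_nonneg (by linarith : (0:ℝ) ≤ -lam) j]
      _ < (ε / (|dd z 0| + 1)) * (|dd z 0| + 1) := by
          apply mul_lt_mul_of_pos_right hj'; positivity
      _ = ε := by field_simp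
  linarith

lemma infDist_le {lam a : ℝ} (h1 : -1 < lam) (h2 : lam < 0) (h3 : lam + a = 1)
    {z : ℕ → ℝ × ℝ} (hz : IsTraj lam a z) (n : ℕ) :
    Metric.infDist (z n) (segEF lam a) ≤ |dd z n| := by
  have hs := hz.1 n
  unfold inL at hs
  rw [abs_le] at hs
  have hmem : (((z n).2, (z n).2) : ℝ × ℝ) ∈ segEF lam a := by
    refine ⟨(z n).2, ⟨hs.1, hs.2⟩, ?_⟩
    have hne : (1 : ℝ) - lam ≠ 0 := by linarith
    have : a * (z n).2 / (1 - lam) = (z n).2 := by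
      rw [show a = 1 - lam by linarith]
      field_simp
    rw [this]
  calc Metric.infDist (z n) (segEF lam a)
      ≤ dist (z n) (((z n).2, (z n).2) : ℝ × ℝ) :=
        Metric.infDist_le_dist_of_mem hmem
    _ = |dd z n| := by
        rw [Prod.dist_eq, Real.dist_eq, Real.dist_eq]
        simp only [sub_self, abs_zero]
        rw [max_eq_left (abs_nonneg _), abs_sub_comm]
        rfl

lemma traj_spec (lam a : ℝ) (p : ℝ × ℝ) (hp : inL p) :
    IsTraj lam a (fun n => (f lam a)^[n] p) := by
  constructor
  · intro n
    induction n with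
    | zero => simpa using hp
    | succ k ih =>
      simp only [Function.iterate_succ_apply']
      unfold inL f
      exact abs_le.mpr (Phi_mem _)
  · intro n
    simp only [Function.iterate_succ_apply']

lemma escape_up {lam a : ℝ} (h1 : -1 < lam) (h2 : lam < 0) (h3 : lam + a = 1)
    {z : ℕ → ℝ × ℝ} (hz : IsTraj lam a z) (hd0 : 0 < dd z 0) :
    ∃ n, (z n).2 = 1 := by
  by_contra hcon
  push_neg at hcon
  have ha : 1 < a := by linarith
  have key : ∀ n : ℕ, dd z n = dd z 0 ∧ (z n).2 = (z 0).2 + n * (a * dd z 0) := by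
    intro n
    induction n with
    | zero => simp
    | succ k ih =>
      have hsk := hz.1 k
      unfold inL at hsk
      rw [abs_le] at hsk
      have hst := step h3 hz k
      have htlb : -1 < (z k).2 + a * ((z k).2 - (z k).1) := by
        have : (z k).2 - (z k).1 = dd z k := rfl
        rw [this, ih.1]
        nlinarith
      by_cases htub : (z k).2 + a * ((z k).2 - (z k).1) ≤ 1
      · have hphi := Phi_of_mem (le_of_lt htlb) htub
        have hs' : (z (k+1)).2 = (z k).2 + a * dd z k := by
          rw [hst, hphi]; rfl
        have hd' : dd z (k+1) = dd z k := by
          unfold dd; rw [hst, hphi]; ring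
        refine ⟨by rw [hd', ih.1], ?_⟩
        rw [hs', ih.1, ih.2]
        push_cast; ring
      · push_neg at htub
        exact absurd (by rw [hst]; exact Phi_of_gt htub) (hcon (k+1))
  have hs0 := hz.1 0
  unfold inL at hs0
  rw [abs_le] at hs0
  have hpos : 0 < a * dd z 0 := by positivity
  obtain ⟨n, hn⟩ := exists_nat_gt (2 / (a * dd z 0))
  have hn2 : 2 < n * (a * dd z 0) := by
    rw [div_lt_iff₀ hpos] at hn; linarith
  have hsn := hz.1 n
  unfold inL at hsn
  rw [abs_le] at hsn
  rw [(key n).2] at hsn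
  nlinarith [hsn.2]

lemma unstable_aux {lam a : ℝ} (h1 : -1 < lam) (h2 : lam < 0) (h3 : lam + a = 1)
    {c : ℝ} (hc1 : -1 ≤ c) (hc2 : c ≤ 0) {δ : ℝ} (hδ : 0 < δ) :
    ∃ z, IsTraj lam a z ∧ dist (z 0) ((c, c) : ℝ × ℝ) < δ ∧
      ∃ n, 1 ≤ dist (z n) ((c, c) : ℝ × ℝ) := by
  set p : ℝ × ℝ := (c - δ/2, c) with hp
  have hpL : inL p := by
    unfold inL
    rw [abs_le]; exact ⟨hc1, by linarith⟩
  set z : ℕ → ℝ × ℝ := fun n => (f lam a)^[n] p with hzdef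
  have hz : IsTraj lam a z := traj_spec lam a p hpL
  have hz0 : z 0 = p := rfl
  have hd0 : 0 < dd z 0 := by
    unfold dd; rw [hz0, hp]; simp; linarith
  obtain ⟨n, hn⟩ := escape_up h1 h2 h3 hz hd0
  refine ⟨z, hz, ?_, n, ?_⟩
  · rw [hz0, hp, Prod.dist_eq, Real.dist_eq, Real.dist_eq]
    simp only [sub_self, abs_zero]
    rw [max_eq_left (abs_nonneg _),
      show c - δ/2 - c = -(δ/2) by ring, abs_neg, abs_of_pos (by linarith)]
    linarith
  · calc (1 : ℝ) ≤ 1 - c := by linarith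
      _ = |(z n).2 - c| := by rw [hn, abs_of_nonneg (by linarith)]
      _ = dist (z n).2 c := (Real.dist_eq _ _).symm
      _ ≤ dist (z n) ((c, c) : ℝ × ℝ) := by
          rw [Prod.dist_eq]; exact le_max_right _ _

/-- Case (f): −1 < λ < 0, β = 1. All fixed points are unstable; every trajectory either
ends up at E or F after finitely many iterations, or converges to the segment EF. -/
theorem stmt9 (lam a : ℝ) (h1 : -1 < lam) (h2 : lam < 0) (h3 : lam + a = 1) :
    (∀ P ∈ fixedSet lam a, ¬ IsStableFixed lam a P) ∧
    ∀ z : ℕ → ℝ × ℝ, IsTraj lam a z →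
      (∃ n, z n = (a / (1 - lam), 1) ∨ z n = (-(a / (1 - lam)), -1)) ∨
      Tendsto (fun n => Metric.infDist (z n) (segEF lam a)) atTop (𝓝 0) := by
  have ha : a = 1 - lam := by linarith
  constructor
  · rintro P ⟨hPL, hPfix⟩ hstab
    have hfix1 : lam * P.1 + a * P.2 = P.1 := congrArg Prod.fst hPfix
    have hPP : P.1 = P.2 := by
      have h0 : (1 - lam) * (P.2 - P.1) = 0 := by rw [ha] at hfix1; linarith
      rcases mul_eq_zero.mp h0 with h | h
      · linarith
      · linarith
    have hPeq : P = ((P.2, P.2) : ℝ × ℝ) := Prod.ext_iff.mpr ⟨hPP, rfl⟩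
    unfold inL at hPL
    rw [abs_le] at hPL
    obtain ⟨δ, hδ, hcl⟩ := hstab 1 one_pos
    by_cases hc : P.2 ≤ 0
    · obtain ⟨z, hz, hnear, n, hfar⟩ := unstable_aux h1 h2 h3 hPL.1 hc hδ
      rw [← hPeq] at hnear hfar
      exact absurd (hcl z hz hnear n) (not_lt.mpr hfar)
    · push_neg at hc
      obtain ⟨z, hz, hnear, n, hfar⟩ :=
        unstable_aux h1 h2 h3 (c := -P.2) (by linarith) (by linarith) hδ
      have hnegP : -P = ((-P.2, -P.2) : ℝ × ℝ) := by rw [hPeq]; rfl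
      have ed : ∀ k, dist (-(z k)) P = dist (z k) ((-P.2, -P.2) : ℝ × ℝ) := by
        intro k
        calc dist (-(z k)) P = dist (-(z k)) (-(-P)) := by rw [neg_neg]
          _ = dist (z k) (-P) := dist_neg_neg _ _
          _ = dist (z k) ((-P.2, -P.2) : ℝ × ℝ) := by rw [hnegP]
      refine absurd (hcl (fun k => -(z k)) (traj_neg hz) ?_ n) (not_lt.mpr ?_)
      · rw [ed 0]; exact hnear
      · rw [ed n]; exact hfar
  · intro z hz
    right
    exact squeeze_zero (fun n => Metric.infDist_nonneg) (infDist_le h1 h2 h3 hz)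
      (dd_tendsto h1 h2 h3 hz)
end
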